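/- arXiv:2405.08898 — 7 statements merged into one kernel-verified Lean document; each statement's English description precedes it below -/
import Mathlib

section
/- If M = [[α, β], [γ, δ]] is a 2×2 unitary complex matrix with β ≠ 0, then φ♯(M) := [[β⁻¹, -β⁻¹α], [δβ⁻¹, γ - δβ⁻¹α]] belongs to U(1,1), i.e. φ♯(M)* · diag(1,-1) · φ♯(M) = diag(1,-1). -/
/-!
If `y = M x`, then since `β ≠ 0` one can solve for `(x₂, y₂)` in terms of `(y₁, x₁)`, and the
resulting linear map is `φ♯(M) : (y₁, x₁) ↦ (x₂, y₂)`. Unitarity of `M` says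
`|x₁|² + |x₂|² = |y₁|² + |y₂|²`, i.e. `|y₁|² - |x₁|² = |x₂|² - |y₂|²`: the map `φ♯(M)` preserves
the form `diag(1, -1)`. To avoid polarization the argument is run on matrices: `M X = Y`, where the
columns of `X` and `Y` are the `x` and `y` belonging to `(y₁, x₁) = e₁, e₂`.
-/

open Matrix

namespace Matrix

theorem conjTranspose_fin_two {R : Type*} [Star R] (a b c d : R) :
    (!![a, b; c, d])ᴴ = !![star a, star c; star b, star d] :=
  eta_fin_two _

theorem conjTranspose_mul_self_eq_of_mul_eq {R n m : Type*} [Semiring R] [StarRing R]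
    [Fintype n] [DecidableEq n] {M : Matrix n n R} (hM : Mᴴ * M = 1) {X Y : Matrix n m R}
    (h : M * X = Y) : Yᴴ * Y = Xᴴ * X := by
  rw [← h, conjTranspose_mul, Matrix.mul_assoc, ← Matrix.mul_assoc Mᴴ, hM, Matrix.one_mul]

section Signature

variable {R : Type*} [Ring R] [StarRing R]

theorem conjTranspose_mul_signature_mul_sub_signature (a b c d : R) :
    (!![a, b; c, d])ᴴ * !![1, 0; 0, -1] * !![a, b; c, d] - !![1, 0; 0, -1] =
      (!![0, 1; a, b])ᴴ * !![0, 1; a, b] - (!![1, 0; c, d])ᴴ * !![1, 0; c, d] := by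
  simp only [conjTranspose_fin_two, mul_fin_two]
  ext i j
  fin_cases i <;> fin_cases j <;>
    simp only [mul_one, mul_zero, add_zero, mul_neg, zero_add, neg_mul, sub_zero, sub_neg_eq_add,
      star_zero, star_one, Fin.zero_eta, Fin.mk_one, Fin.isValue, sub_apply, of_apply, cons_val',
      cons_val_zero, cons_val_one, cons_val_fin_one] <;>
    abel

theorem conjTranspose_mul_signature_mul_eq_signature_iff (a b c d : R) :
    (!![a, b; c, d])ᴴ * !![1, 0; 0, -1] * !![a, b; c, d] = !![1, 0; 0, -1] ↔
      (!![1, 0; c, d])ᴴ * !![1, 0; c, d] = (!![0, 1; a, b])ᴴ * !![0, 1; a, b] := by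
  rw [← sub_eq_zero, conjTranspose_mul_signature_mul_sub_signature, sub_eq_zero, eq_comm]

end Signature

theorem mul_exchange_eq {K : Type*} [DivisionRing K] {α β γ δ : K} (hβ : β ≠ 0) :
    !![α, β; γ, δ] * !![0, 1; β⁻¹, -β⁻¹ * α] = !![1, 0; δ * β⁻¹, γ - δ * β⁻¹ * α] := by
  simp [hβ, sub_eq_add_neg, _root_.mul_assoc]

end Matrix

theorem phiSharp_mem_U11 (α β γ δ : ℂ) (hβ : β ≠ 0)
    (hU : (!![α, β; γ, δ])ᴴ * !![α, β; γ, δ] = 1) :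
    (!![β⁻¹, -β⁻¹ * α; δ * β⁻¹, γ - δ * β⁻¹ * α])ᴴ * !![(1 : ℂ), 0; 0, -1] *
      !![β⁻¹, -β⁻¹ * α; δ * β⁻¹, γ - δ * β⁻¹ * α] = !![(1 : ℂ), 0; 0, -1] :=
  (conjTranspose_mul_signature_mul_eq_signature_iff _ _ _ _).2
    (conjTranspose_mul_self_eq_of_mul_eq hU (mul_exchange_eq hβ))
end

section
/- If M = [[α, β], [γ, δ]] is a 2×2 unitary complex matrix with β ≠ 0, then φ♭(M) := [[γ - δβ⁻¹α, δβ⁻¹], [-β⁻¹α, β⁻¹]] belongs to U(1,1), i.e. φ♭(M)* diag(1,-1) φ♭(M) = diag(1,-1). -/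
/-!
If `M` sends `(x₁, x₂)` to `(y₁, y₂)`, then `φ♭(M)` sends `(x₁, y₁)` to `(y₂, x₂)`; in matrix form
`φ♭(M) P = Q` with `P = [[1, 0], [α, β]]` (invertible as `β ≠ 0`) and `Q = [[γ, δ], [0, 1]]`.
With `J = diag(1, -1)` one has `Q* J Q - P* J P = M* M - 1 = 0`, which is the statement
`|x₁|² - |y₁|² = |y₂|² - |x₂|²` of unitarity, and conjugating by `P⁻¹` gives `φ♭(M)* J φ♭(M) = J`.
-/

open Matrix

theorem star_mul_mul_eq_of_mul_eq {R : Type*} [Monoid R] [StarMul R] {f p q j : R}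
    (hp : IsUnit p) (hfpq : f * p = q) (hq : star q * j * q = star p * j * p) :
    star f * j * f = j := by
  obtain ⟨u, rfl⟩ := hp
  obtain rfl : f = q * ↑u⁻¹ := by rw [← hfpq, Units.mul_inv_cancel_right]
  calc star (q * ↑u⁻¹) * j * (q * ↑u⁻¹) = star ↑u⁻¹ * (star q * j * q) * ↑u⁻¹ := by
        simp only [star_mul, mul_assoc]
    _ = star (↑u * ↑u⁻¹) * j * (↑u * ↑u⁻¹) := by
        rw [hq]; simp only [star_mul, mul_assoc]
    _ = j := by simp

section

variable {K : Type*}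

def phiFlat [Field K] (α β γ δ : K) : Matrix (Fin 2) (Fin 2) K :=
  !![γ - δ * β⁻¹ * α, δ * β⁻¹; -β⁻¹ * α, β⁻¹]

theorem phiFlat_mul_eq [Field K] {β : K} (α γ δ : K) (hβ : β ≠ 0) :
    phiFlat α β γ δ * !![1, 0; α, β] = !![γ, δ; 0, 1] := by
  ext i j
  fin_cases i <;> fin_cases j <;> simp [phiFlat, hβ]

theorem conjTranspose_mul_mul_sub_eq [CommRing K] [StarRing K] (α β γ δ : K) :
    !![γ, δ; 0, 1]ᴴ * !![1, 0; 0, -1] * !![γ, δ; 0, 1] -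
        !![1, 0; α, β]ᴴ * !![1, 0; 0, -1] * !![1, 0; α, β] =
      !![α, β; γ, δ]ᴴ * !![α, β; γ, δ] - 1 := by
  ext i j
  fin_cases i <;> fin_cases j <;> simp [Matrix.mul_apply, Fin.sum_univ_two] <;> ring

end

theorem phiFlat_mem_U11 (α β γ δ : ℂ) (hβ : β ≠ 0)
    (hU : (!![α, β; γ, δ])ᴴ * !![α, β; γ, δ] = 1) :
    (!![γ - δ * β⁻¹ * α, δ * β⁻¹; -β⁻¹ * α, β⁻¹])ᴴ * !![(1 : ℂ), 0; 0, -1] *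
      !![γ - δ * β⁻¹ * α, δ * β⁻¹; -β⁻¹ * α, β⁻¹] = !![(1 : ℂ), 0; 0, -1] := by
  have hP : IsUnit !![1, 0; α, β] := by
    rw [isUnit_iff_isUnit_det, det_fin_two_of]
    simpa using hβ
  have hQP : !![γ, δ; 0, 1]ᴴ * !![1, 0; 0, -1] * !![γ, δ; 0, 1] =
      !![1, 0; α, β]ᴴ * !![1, 0; 0, -1] * !![1, 0; α, β] := by
    rw [← sub_eq_zero, conjTranspose_mul_mul_sub_eq, hU, sub_self]
  exact star_mul_mul_eq_of_mul_eq hP (phiFlat_mul_eq α γ δ hβ) hQP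
end

section
/- Let M be a 2×2 complex matrix with (1,2)-entry nonzero and such that I + M is invertible, and suppose the (1,2)-entry of (I+M)⁻¹M is also nonzero. Then φ♯((I+M)⁻¹ M) = [[1,1],[0,1]] · φ♯(M) · [[1,0],[-1,1]], where for N = [[α, β], [γ, δ]] with β ≠ 0, φ♯(N) = [[β⁻¹, -β⁻¹α], [δβ⁻¹, γ - δβ⁻¹α]]. -/
open Matrix

/-! If `N` sends `(x, y)` to `(u, v)` and `N 0 1 ≠ 0`, then `φ♯ N` is the matrix sending `(u, x)`
to `(y, v)`; `transferIn N` and `transferOut N` send `(x, y)` to `(u, x)` and to `(y, v)`. For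
`N = (1 + M)⁻¹ * M` we have `M * (1 - N) = N`, i.e. `M` sends `(x - u, y - v)` to `(u, v)`, so the
two triangular factors of the theorem are the changes of coordinates `(u, x) ↦ (u, x - u)` and
`(y - v, v) ↦ (y, v)`. -/

/-- `φ♯` of a 2×2 matrix with nonzero (1,2)-entry. -/
noncomputable def phiSharp (M : Matrix (Fin 2) (Fin 2) ℂ) : Matrix (Fin 2) (Fin 2) ℂ :=
  !![(M 0 1)⁻¹, -(M 0 1)⁻¹ * M 0 0;
     M 1 1 * (M 0 1)⁻¹, M 1 0 - M 1 1 * (M 0 1)⁻¹ * M 0 0]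

section Transfer

variable {R : Type*} [CommRing R]

def transferIn (N : Matrix (Fin 2) (Fin 2) R) : Matrix (Fin 2) (Fin 2) R :=
  !![N 0 0, N 0 1; 1, 0]

def transferOut (N : Matrix (Fin 2) (Fin 2) R) : Matrix (Fin 2) (Fin 2) R :=
  !![0, 1; N 1 0, N 1 1]

theorem det_transferIn (N : Matrix (Fin 2) (Fin 2) R) : (transferIn N).det = -N 0 1 := by
  simp [transferIn, det_fin_two]

theorem transferIn_mul (M X : Matrix (Fin 2) (Fin 2) R) :
    transferIn M * X = !![(M * X) 0 0, (M * X) 0 1; X 0 0, X 0 1] := by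
  ext i j; fin_cases i <;> fin_cases j <;> simp [transferIn, mul_apply, Fin.sum_univ_two]

theorem transferOut_mul (M X : Matrix (Fin 2) (Fin 2) R) :
    transferOut M * X = !![X 1 0, X 1 1; (M * X) 1 0, (M * X) 1 1] := by
  ext i j; fin_cases i <;> fin_cases j <;> simp [transferOut, mul_apply, Fin.sum_univ_two]

theorem transferIn_mul_one_sub {M N : Matrix (Fin 2) (Fin 2) R} (h : M * (1 - N) = N) :
    transferIn M * (1 - N) = !![1, 0; -1, 1] * transferIn N := by
  rw [transferIn_mul, h]
  ext i j; fin_cases i <;> fin_cases j <;> simp [transferIn, one_apply, neg_add_eq_sub]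

theorem transferOut_mul_one_sub {M N : Matrix (Fin 2) (Fin 2) R} (h : M * (1 - N) = N) :
    !![1, 1; 0, 1] * transferOut M * (1 - N) = transferOut N := by
  rw [Matrix.mul_assoc, transferOut_mul, h]
  ext i j; fin_cases i <;> fin_cases j <;> simp [transferOut, one_apply]

end Transfer

theorem mul_one_sub_inv_one_add_mul {n R : Type*} [Fintype n] [DecidableEq n] [CommRing R]
    (M : Matrix n n R) (h : IsUnit (1 + M).det) :
    M * (1 - (1 + M)⁻¹ * M) = (1 + M)⁻¹ * M := by
  have hN : (1 + M) * ((1 + M)⁻¹ * M) = M := mul_nonsing_inv_cancel_left _ _ h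
  rw [add_mul, one_mul] at hN
  rw [mul_sub, mul_one]
  exact (eq_sub_of_add_eq hN).symm

theorem phiSharp_mul_transferIn {N : Matrix (Fin 2) (Fin 2) ℂ} (hN : N 0 1 ≠ 0) :
    phiSharp N * transferIn N = transferOut N := by
  ext i j
  fin_cases i <;> fin_cases j <;>
    simp [phiSharp, transferIn, transferOut, mul_apply, Fin.sum_univ_two] <;> field_simp

theorem eq_phiSharp_of_mul_transferIn {N T : Matrix (Fin 2) (Fin 2) ℂ} (hN : N 0 1 ≠ 0)
    (hT : T * transferIn N = transferOut N) : T = phiSharp N := by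
  have : Invertible (transferIn N) := invertibleOfIsUnitDet _ (by simpa [det_transferIn] using hN)
  exact Matrix.mul_left_inj_of_invertible _ |>.mp (hT.trans (phiSharp_mul_transferIn hN).symm)

theorem phiSharp_cayley (M : Matrix (Fin 2) (Fin 2) ℂ)
    (hβ : M 0 1 ≠ 0) (hdet : (1 + M).det ≠ 0) (hβ' : ((1 + M)⁻¹ * M) 0 1 ≠ 0) :
    phiSharp ((1 + M)⁻¹ * M) = !![(1 : ℂ), 1; 0, 1] * phiSharp M * !![(1 : ℂ), 0; -1, 1] := by
  have hMN := mul_one_sub_inv_one_add_mul M (isUnit_iff_ne_zero.mpr hdet)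
  refine (eq_phiSharp_of_mul_transferIn hβ' ?_).symm
  calc !![1, 1; 0, 1] * phiSharp M * !![1, 0; -1, 1] * transferIn ((1 + M)⁻¹ * M)
      = !![1, 1; 0, 1] * (phiSharp M * transferIn M) * (1 - (1 + M)⁻¹ * M) := by
        rw [Matrix.mul_assoc _ !![1, 0; -1, 1], ← transferIn_mul_one_sub hMN]
        simp only [Matrix.mul_assoc]
    _ = transferOut ((1 + M)⁻¹ * M) := by
        rw [phiSharp_mul_transferIn hβ, transferOut_mul_one_sub hMN]
end

section
/- Let U be an n×n unitary complex matrix written in block form U = [[A,B],[C,D]] with A of size n₁×n₁ and D of size n₂×n₂, and let P be an n₂×n₂ unitary matrix. Then D - P is invertible if and only if the block matrix [[A,B],[C,D-P]] is invertible. -/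
/-!
Since `U` is unitary, `Uᴴ * [[A, B], [C, D - P]] = Uᴴ * (U - diag(0, P))` is the block upper
triangular matrix `[[1, -Cᴴ P], [0, 1 - Dᴴ P]]`, so the block matrix is invertible iff
`1 - Dᴴ P` is. Multiplying on the right by the unitary `Pᴴ` gives `Pᴴ - Dᴴ = -(D - P)ᴴ`.
-/

open Matrix

theorem isUnit_one_sub_star_mul_iff {R : Type*} [Ring R] [StarRing R] {p : R}
    (hp : p ∈ unitary R) (d : R) : IsUnit (1 - star d * p) ↔ IsUnit (d - p) := by
  have h : (1 - star d * p) * star p = -star (d - p) := by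
    rw [sub_mul, one_mul, mul_assoc, Unitary.mul_star_self_of_mem hp, mul_one, star_sub, neg_sub]
  rw [← (Unitary.isUnit_coe (U := ⟨star p, Unitary.star_mem hp⟩)).mul_right_iff, h,
    IsUnit.neg_iff, isUnit_star]

namespace Matrix

variable {m n α : Type*} [Fintype m] [Fintype n] [DecidableEq m] [DecidableEq n]
  [Ring α] [StarRing α]

theorem conjTranspose_mul_fromBlocks_sub_eq {A : Matrix m m α} {B : Matrix m n α}
    {C : Matrix n m α} {D : Matrix n n α} (hU : (fromBlocks A B C D)ᴴ * fromBlocks A B C D = 1)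
    (P : Matrix n n α) :
    (fromBlocks A B C D)ᴴ * fromBlocks A B C (D - P) =
      fromBlocks 1 (-(Cᴴ * P)) 0 (1 - Dᴴ * P) := by
  have hsplit : fromBlocks A B C (D - P) = fromBlocks A B C D + fromBlocks 0 0 0 (-P) := by
    rw [fromBlocks_add, add_zero, add_zero, add_zero, sub_eq_add_neg]
  rw [hsplit, mul_add, hU, fromBlocks_conjTranspose, fromBlocks_multiply, ← fromBlocks_one,
    fromBlocks_add]
  simp only [Matrix.mul_zero, Matrix.mul_neg, add_zero, zero_add, sub_eq_add_neg]

end Matrix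

theorem schur_block_invertible_iff (n₁ n₂ : ℕ)
    (A : Matrix (Fin n₁) (Fin n₁) ℂ) (B : Matrix (Fin n₁) (Fin n₂) ℂ)
    (C : Matrix (Fin n₂) (Fin n₁) ℂ) (D : Matrix (Fin n₂) (Fin n₂) ℂ)
    (P : Matrix (Fin n₂) (Fin n₂) ℂ)
    (hU : (fromBlocks A B C D)ᴴ * fromBlocks A B C D = 1)
    (hP : Pᴴ * P = 1) :
    IsUnit (D - P) ↔ IsUnit (fromBlocks A B C (D - P)) := by
  have hUstar : IsUnit (fromBlocks A B C D)ᴴ :=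
    Unitary.isUnit_coe (U := ⟨_, Unitary.star_mem (mem_unitaryGroup_iff'.mpr hU)⟩)
  rw [← hUstar.mul_left_iff, conjTranspose_mul_fromBlocks_sub_eq hU, isUnit_fromBlocks_zero₂₁,
    and_iff_right isUnit_one]
  exact (isUnit_one_sub_star_mul_iff (mem_unitaryGroup_iff'.mpr hP) D).symm
end

section
/- Let U = [[A,B],[C,D]] be an n×n unitary complex matrix in block form, and let P be an n₂×n₂ unitary matrix such that D - P is invertible. Then the Schur complement A - B(D-P)⁻¹C is a unitary n₁×n₁ matrix. -/
/-!
Put `R = (D - P)⁻¹` and `Y = -R C`. Then `C + D Y = P Y`, so the isometry `U` maps the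
column `[1; Y]` to `[A - B R C; P Y]`. Comparing Gram matrices and using that `P` is an
isometry gives `(A - B R C)ᴴ (A - B R C) + Yᴴ Y = 1 + Yᴴ Y`; a square matrix with a left
inverse is unitary.
-/

open Matrix

namespace Matrix

variable {α : Type*} [Ring α] [StarRing α] {k l m n : Type*}

theorem conjTranspose_fromRows_mul_self {m₁ m₂ : Type*} [Fintype m₁] [Fintype m₂]
    (X₁ : Matrix m₁ n α) (X₂ : Matrix m₂ n α) :
    (fromRows X₁ X₂)ᴴ * fromRows X₁ X₂ = X₁ᴴ * X₁ + X₂ᴴ * X₂ := by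
  rw [conjTranspose_fromRows_eq_fromCols_conjTranspose, fromCols_mul_fromRows]

theorem conjTranspose_mul_self_mul_left_of_conjTranspose_mul_self_eq_one
    [Fintype k] [Fintype m] [DecidableEq m]
    {U : Matrix k m α} (hU : Uᴴ * U = 1) (X : Matrix m n α) :
    (U * X)ᴴ * (U * X) = Xᴴ * X := by
  rw [conjTranspose_mul, Matrix.mul_assoc, ← Matrix.mul_assoc Uᴴ, hU, Matrix.one_mul]

theorem conjTranspose_mul_self_add_mul_eq_one_of_fromBlocks
    [Fintype k] [Fintype l] [Fintype m] [Fintype n] [DecidableEq m] [DecidableEq n]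
    {A : Matrix l m α} {B : Matrix l n α} {C : Matrix k m α} {D : Matrix k n α}
    {P : Matrix k n α} {Y : Matrix n m α}
    (hU : (fromBlocks A B C D)ᴴ * fromBlocks A B C D = 1) (hP : Pᴴ * P = 1)
    (hY : C + D * Y = P * Y) :
    (A + B * Y)ᴴ * (A + B * Y) = 1 := by
  have hgram := conjTranspose_mul_self_mul_left_of_conjTranspose_mul_self_eq_one hU
    (fromRows 1 Y)
  rw [fromBlocks_mul_fromRows, Matrix.mul_one, Matrix.mul_one, hY,
    conjTranspose_fromRows_mul_self, conjTranspose_fromRows_mul_self,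
    conjTranspose_mul_self_mul_left_of_conjTranspose_mul_self_eq_one hP,
    conjTranspose_one, Matrix.one_mul] at hgram
  exact add_right_cancel hgram

end Matrix

theorem schur_complement_unitary_general (n₁ n₂ : ℕ)
    (A : Matrix (Fin n₁) (Fin n₁) ℂ) (B : Matrix (Fin n₁) (Fin n₂) ℂ)
    (C : Matrix (Fin n₂) (Fin n₁) ℂ) (D : Matrix (Fin n₂) (Fin n₂) ℂ)
    (P : Matrix (Fin n₂) (Fin n₂) ℂ)
    (hU : (fromBlocks A B C D)ᴴ * fromBlocks A B C D = 1)
    (hP : Pᴴ * P = 1)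
    (hDP : IsUnit (D - P)) :
    A - B * (D - P)⁻¹ * C ∈ Matrix.unitaryGroup (Fin n₁) ℂ := by
  have hfeedback : C + D * -((D - P)⁻¹ * C) = P * -((D - P)⁻¹ * C) := by
    have hcancel : (D - P) * ((D - P)⁻¹ * C) = C :=
      mul_nonsing_inv_cancel_left _ _ ((isUnit_iff_isUnit_det _).mp hDP)
    nth_rewrite 1 [← hcancel]
    rw [Matrix.mul_neg, Matrix.mul_neg, Matrix.sub_mul]
    abel
  have hschur : A - B * (D - P)⁻¹ * C = A + B * -((D - P)⁻¹ * C) := by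
    rw [Matrix.mul_neg, ← sub_eq_add_neg, Matrix.mul_assoc]
  rw [mem_unitaryGroup_iff', star_eq_conjTranspose, hschur]
  exact conjTranspose_mul_self_add_mul_eq_one_of_fromBlocks hU hP hfeedback

theorem schur_complement_unitary (n₁ n₂ : ℕ)
    (A : Matrix (Fin n₁) (Fin n₁) ℂ) (B : Matrix (Fin n₁) (Fin n₂) ℂ)
    (C : Matrix (Fin n₂) (Fin n₁) ℂ) (D : Matrix (Fin n₂) (Fin n₂) ℂ)
    (P : Matrix (Fin n₂) (Fin n₂) ℂ)
    (hU : (fromBlocks A B C D)ᴴ * fromBlocks A B C D = 1)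
    (hU' : fromBlocks A B C D * (fromBlocks A B C D)ᴴ = 1)
    (hP : Pᴴ * P = 1)
    (hDP : IsUnit (D - P)) :
    A - B * (D - P)⁻¹ * C ∈ Matrix.unitaryGroup (Fin n₁) ℂ :=
  schur_complement_unitary_general n₁ n₂ A B C D P hU hP hDP
end

section
/- Let U = [[A,B],[C,D]] be an n×n unitary complex matrix in block form. Let P, W ∈ ℂ^{n₂×n₂} satisfy W*P = I, and suppose D - P and D - W are both invertible. Then (A - B(D-W)⁻¹C)* (A - B(D-P)⁻¹C) = I_{n₁}. -/
/-!
Write `X = (D - W)⁻¹` and `Y = (D - P)⁻¹`. The column isometry relations of `U` turn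
`(A - B X C)ᴴ (A - B Y C)` into `1 + Cᴴ (D Y + Xᴴ Dᴴ + Xᴴ (1 - Dᴴ D) Y - 1) C`, and the bracket
vanishes: sandwiching `(D - W)ᴴ (D - P) = (D - W)ᴴ D + Dᴴ (D - P) + (1 - Dᴴ D) - (1 - Wᴴ P)`
between `Xᴴ` and `Y` gives `1 = D Y + Xᴴ Dᴴ + Xᴴ (1 - Dᴴ D) Y`, since `Wᴴ P = 1`.
-/

open Matrix

theorem mul_add_mul_add_mul_sub_mul_mul_eq_one {R : Type*} [Ring R] {D E L P V Y : R}
    (hVP : V * P = 1) (hL : L * (E - V) = 1) (hY : (D - P) * Y = 1) :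
    D * Y + L * E + L * (1 - E * D) * Y = 1 := by
  have hsplit : (E - V) * D + E * (D - P) + (1 - E * D) = (E - V) * (D - P) := by
    rw [← hVP]; noncomm_ring
  have hD : L * ((E - V) * D) * Y = D * Y := by rw [← mul_assoc, hL, one_mul]
  have hE : L * (E * (D - P)) * Y = L * E := by rw [mul_assoc, mul_assoc, hY, mul_one]
  calc D * Y + L * E + L * (1 - E * D) * Y
      = L * ((E - V) * D + E * (D - P) + (1 - E * D)) * Y := by
        rw [mul_add, mul_add, add_mul, add_mul, hD, hE]
    _ = 1 := by rw [hsplit, ← mul_assoc, hL, one_mul, hY]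

section Blocks

variable {R m n : Type*} [Ring R] [StarRing R] [Fintype m] [Fintype n]
  [DecidableEq m] [DecidableEq n]

theorem fromBlocks_conjTranspose_mul_self_eq_one_iff
    {A : Matrix m m R} {B : Matrix m n R} {C : Matrix n m R} {D : Matrix n n R} :
    (fromBlocks A B C D)ᴴ * fromBlocks A B C D = 1 ↔
      Aᴴ * A + Cᴴ * C = 1 ∧ Aᴴ * B + Cᴴ * D = 0 ∧ Bᴴ * A + Dᴴ * C = 0 ∧
        Bᴴ * B + Dᴴ * D = 1 := by
  rw [fromBlocks_conjTranspose, fromBlocks_multiply, ← fromBlocks_one, fromBlocks_inj]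

theorem conjTranspose_mul_eq_one_of_fromBlocks_isometry
    {A : Matrix m m R} {B : Matrix m n R} {C : Matrix n m R} {D P W X Y : Matrix n n R}
    (hU : (fromBlocks A B C D)ᴴ * fromBlocks A B C D = 1) (hWP : Wᴴ * P = 1)
    (hX : (D - W) * X = 1) (hY : (D - P) * Y = 1) :
    (A - B * X * C)ᴴ * (A - B * Y * C) = 1 := by
  obtain ⟨hAA, hAB, hBA, hBB⟩ := fromBlocks_conjTranspose_mul_self_eq_one_iff.mp hU
  have hXH : Xᴴ * (Dᴴ - Wᴴ) = 1 := by
    rw [← conjTranspose_sub, ← conjTranspose_mul, hX, conjTranspose_one]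
  have key := mul_add_mul_add_mul_sub_mul_mul_eq_one hWP hXH hY
  calc (A - B * X * C)ᴴ * (A - B * Y * C)
      = Aᴴ * A - (Aᴴ * B) * (Y * C) - Cᴴ * (Xᴴ * (Bᴴ * A))
          + Cᴴ * (Xᴴ * ((Bᴴ * B) * (Y * C))) := by
        simp only [conjTranspose_sub, conjTranspose_mul, sub_mul, mul_sub, Matrix.mul_assoc]
        abel
    _ = 1 - Cᴴ * C - -(Cᴴ * D) * (Y * C) - Cᴴ * (Xᴴ * -(Dᴴ * C))
          + Cᴴ * (Xᴴ * ((1 - Dᴴ * D) * (Y * C))) := by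
        rw [eq_sub_of_add_eq hAA, eq_neg_of_add_eq_zero_left hAB, eq_neg_of_add_eq_zero_left hBA,
          eq_sub_of_add_eq hBB]
    _ = 1 - Cᴴ * C + Cᴴ * ((D * Y + Xᴴ * Dᴴ + Xᴴ * (1 - Dᴴ * D) * Y) * C) := by
        simp only [Matrix.sub_mul, Matrix.add_mul, Matrix.mul_add, Matrix.mul_sub,
          Matrix.mul_neg, Matrix.neg_mul, Matrix.one_mul, Matrix.mul_one, Matrix.mul_assoc]
        abel
    _ = 1 := by rw [key, Matrix.one_mul, sub_add_cancel]

end Blocks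

theorem schur_complement_isometry_general (n₁ n₂ : ℕ)
    (A : Matrix (Fin n₁) (Fin n₁) ℂ) (B : Matrix (Fin n₁) (Fin n₂) ℂ)
    (C : Matrix (Fin n₂) (Fin n₁) ℂ) (D : Matrix (Fin n₂) (Fin n₂) ℂ)
    (P W : Matrix (Fin n₂) (Fin n₂) ℂ)
    (hU : (fromBlocks A B C D)ᴴ * fromBlocks A B C D = 1)
    (hWP : Wᴴ * P = 1)
    (hDP : IsUnit (D - P)) (hDW : IsUnit (D - W)) :
    (A - B * (D - W)⁻¹ * C)ᴴ * (A - B * (D - P)⁻¹ * C) = 1 :=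
  conjTranspose_mul_eq_one_of_fromBlocks_isometry hU hWP
    (mul_nonsing_inv _ ((isUnit_iff_isUnit_det _).mp hDW))
    (mul_nonsing_inv _ ((isUnit_iff_isUnit_det _).mp hDP))

theorem schur_complement_isometry (n₁ n₂ : ℕ)
    (A : Matrix (Fin n₁) (Fin n₁) ℂ) (B : Matrix (Fin n₁) (Fin n₂) ℂ)
    (C : Matrix (Fin n₂) (Fin n₁) ℂ) (D : Matrix (Fin n₂) (Fin n₂) ℂ)
    (P W : Matrix (Fin n₂) (Fin n₂) ℂ)
    (hU : (fromBlocks A B C D)ᴴ * fromBlocks A B C D = 1)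
    (hU' : fromBlocks A B C D * (fromBlocks A B C D)ᴴ = 1)
    (hWP : Wᴴ * P = 1)
    (hDP : IsUnit (D - P)) (hDW : IsUnit (D - W)) :
    (A - B * (D - W)⁻¹ * C)ᴴ * (A - B * (D - P)⁻¹ * C) = 1 :=
  schur_complement_isometry_general n₁ n₂ A B C D P W hU hWP hDP hDW
end

section
/- If T ∈ ℂ^{2×2} satisfies T* diag(1,-1) T = diag(1,-1), then (Tr T)² / det T is a nonnegative real number. -/
/-!
If `Tᴴ J T = J` with `J² = 1`, then `T⁻¹ = J Tᴴ J`, so `tr T⁻¹ = conj (tr T)`. For a `2 × 2`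
matrix `tr T⁻¹ = tr T / det T`, hence `(tr T)² / det T = tr T · conj (tr T) = |tr T|²`.
-/

open Matrix

namespace Matrix

section Isometry

variable {n R : Type*} [Fintype n] [DecidableEq n] [CommRing R] [StarRing R]
  {T J : Matrix n n R}

theorem inv_eq_of_conjTranspose_mul_mul_eq (hJ : J * J = 1) (hT : Tᴴ * J * T = J) :
    T⁻¹ = J * Tᴴ * J :=
  inv_eq_left_inv <| by
    rw [Matrix.mul_assoc, Matrix.mul_assoc, ← Matrix.mul_assoc Tᴴ, hT, hJ]

theorem trace_inv_eq_star_trace_of_conjTranspose_mul_mul_eq (hJ : J * J = 1)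
    (hT : Tᴴ * J * T = J) : trace T⁻¹ = star (trace T) := by
  rw [inv_eq_of_conjTranspose_mul_mul_eq hJ hT, trace_mul_cycle, hJ, Matrix.one_mul,
    trace_conjTranspose]

end Isometry

theorem trace_inv_fin_two {K : Type*} [Field K] (A : Matrix (Fin 2) (Fin 2) K) :
    trace A⁻¹ = trace A / det A := by
  rw [inv_def, trace_smul, Ring.inverse_eq_inv', adjugate_fin_two, trace_fin_two_of, trace_fin_two,
    smul_eq_mul, div_eq_inv_mul]
  ring

end Matrix

theorem U11_trace_sq_div_det_nonneg (T : Matrix (Fin 2) (Fin 2) ℂ)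
    (hT : Tᴴ * !![(1 : ℂ), 0; 0, -1] * T = !![(1 : ℂ), 0; 0, -1]) :
    ∃ r : ℝ, 0 ≤ r ∧ (T.trace) ^ 2 / T.det = (r : ℂ) := by
  have hJ : !![(1 : ℂ), 0; 0, -1] * !![(1 : ℂ), 0; 0, -1] = 1 := by
    simp [one_fin_two]
  have htrace_div_det : T.trace / T.det = star T.trace := by
    rw [← trace_inv_fin_two, trace_inv_eq_star_trace_of_conjTranspose_mul_mul_eq hJ hT]
  refine ⟨Complex.normSq T.trace, Complex.normSq_nonneg _, ?_⟩
  calc T.trace ^ 2 / T.det = T.trace * (T.trace / T.det) := by ring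
    _ = Complex.normSq T.trace := by rw [htrace_div_det, Complex.star_def, Complex.mul_conj]
end
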